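/- arXiv:2005.03803 — 3 statements merged into one kernel-verified Lean document; each statement's English description precedes it below -/
import Mathlib

section
/- Let a₁ > aₙ and a₁ ≥ … ≥ aₙ ≥ 2 be integers, n ≥ 2. The minimum of (v₁+…+vₙ)/min_i(aᵢvᵢ) over nonzero v ∈ ℤ≥0ⁿ with all vᵢ > 0 is attained exactly at the positive integer multiples of the vector lcm(a₁,…,aₙ)·(1/a₁,…,1/aₙ). -/
/-- For integers `a₁ ≥ … ≥ aₙ ≥ 2` with `a₁ > aₙ` (`n ≥ 2`), the minimum over `v ∈ ℤ₊ⁿ` of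
`(v₁ + … + vₙ) / min_i (aᵢ vᵢ)` is `Σ 1/aᵢ`, and it is attained exactly at the positive
integer multiples of `lcm(a₁,…,aₙ) · (1/a₁,…,1/aₙ)`. -/
theorem lct_monomial_ideal_unique_minimizer (n : ℕ) (hn : 2 ≤ n) (a : Fin n → ℕ)
    (ha2 : ∀ i, 2 ≤ a i) (hmono : ∀ i j : Fin n, i ≤ j → a j ≤ a i)
    (hstrict : a ⟨n - 1, by omega⟩ < a ⟨0, by omega⟩) :
    IsLeast {r : ℝ | ∃ v : Fin n → ℕ, (∀ i, 0 < v i) ∧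
        r = (∑ i, (v i : ℝ)) /
          ((Finset.univ.inf' ⟨⟨0, by omega⟩, Finset.mem_univ _⟩ fun i => a i * v i : ℕ) : ℝ)}
      (∑ i, 1 / (a i : ℝ)) ∧
    ∀ v : Fin n → ℕ, (∀ i, 0 < v i) →
      ((∑ i, (v i : ℝ)) /
          ((Finset.univ.inf' ⟨⟨0, by omega⟩, Finset.mem_univ _⟩ fun i => a i * v i : ℕ) : ℝ)
          = ∑ i, 1 / (a i : ℝ) ↔
        ∃ k : ℕ, 0 < k ∧ ∀ i, v i = k * (Finset.lcm Finset.univ a / a i)) := by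
  have ha0 : ∀ i, 0 < a i := fun i => lt_of_lt_of_le two_pos (ha2 i)
  have haR : ∀ i, (0:ℝ) < (a i : ℝ) := fun i => by exact_mod_cast ha0 i
  set L := Finset.lcm Finset.univ a with hLdef
  have hdvd : ∀ i, a i ∣ L := fun i => Finset.dvd_lcm (Finset.mem_univ i)
  have hL0 : 0 < L := by
    rcases Nat.eq_zero_or_pos L with h | h
    · rw [hLdef, Finset.lcm_eq_zero_iff] at h
      obtain ⟨i, -, hi⟩ := h
      exact absurd hi (ha0 i).ne'
    · exact h
  -- key computation for multiples of the canonical vector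
  have multkey : ∀ k : ℕ, 0 < k → ∀ v : Fin n → ℕ, (∀ i, v i = k * (L / a i)) →
      (∀ i, 0 < v i) ∧
      (∑ i, (v i : ℝ)) /
          ((Finset.univ.inf' ⟨⟨0, by omega⟩, Finset.mem_univ _⟩ fun i => a i * v i : ℕ) : ℝ)
          = ∑ i, 1 / (a i : ℝ) := by
    intro k hk v hv
    have havi : ∀ i, a i * v i = k * L := by
      intro i
      rw [hv i, mul_left_comm, Nat.mul_div_cancel' (hdvd i)]
    have hpos : ∀ i, 0 < v i := by
      intro i
      rw [hv i]
      exact Nat.mul_pos hk (Nat.div_pos (Nat.le_of_dvd hL0 (hdvd i)) (ha0 i))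
    refine ⟨hpos, ?_⟩
    have hinf : (Finset.univ.inf' ⟨⟨0, by omega⟩, Finset.mem_univ _⟩
        fun i => a i * v i : ℕ) = k * L := by
      refine le_antisymm ?_ (Finset.le_inf' _ _ fun i _ => (havi i).ge)
      exact (Finset.inf'_le _ (Finset.mem_univ ⟨0, by omega⟩)).trans_eq (havi _)
    have hsum : ∑ i, (v i : ℝ) = ((k : ℝ) * L) * ∑ i, 1 / (a i : ℝ) := by
      rw [Finset.mul_sum]
      refine Finset.sum_congr rfl fun i _ => ?_
      rw [hv i, Nat.cast_mul, Nat.cast_div (hdvd i) (haR i).ne']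
      field_simp
    rw [hinf, hsum]
    have hkL : ((k : ℝ) * L) ≠ 0 := by positivity
    push_cast
    exact mul_div_cancel_left₀ _ hkL
  -- lower bound and equality analysis for a general positive vector
  have genkey : ∀ v : Fin n → ℕ, (∀ i, 0 < v i) →
      (∑ i, 1 / (a i : ℝ)) ≤ (∑ i, (v i : ℝ)) /
          ((Finset.univ.inf' ⟨⟨0, by omega⟩, Finset.mem_univ _⟩ fun i => a i * v i : ℕ) : ℝ) ∧
      ((∑ i, (v i : ℝ)) /
          ((Finset.univ.inf' ⟨⟨0, by omega⟩, Finset.mem_univ _⟩ fun i => a i * v i : ℕ) : ℝ)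
          = ∑ i, 1 / (a i : ℝ) →
        ∃ k : ℕ, 0 < k ∧ ∀ i, v i = k * (L / a i)) := by
    intro v hv
    set m : ℕ := Finset.univ.inf' ⟨⟨0, by omega⟩, Finset.mem_univ _⟩ fun i => a i * v i with hm
    have hm_le : ∀ i, m ≤ a i * v i := fun i => Finset.inf'_le _ (Finset.mem_univ i)
    have hm_pos : 0 < m := by
      rw [hm]
      exact (Finset.lt_inf'_iff _).mpr fun i _ => Nat.mul_pos (ha0 i) (hv i)
    have hmR : (0:ℝ) < (m : ℝ) := by exact_mod_cast hm_pos
    have hle : ∀ i ∈ Finset.univ, (m : ℝ) / a i ≤ (v i : ℝ) := by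
      intro i _
      rw [div_le_iff₀ (haR i)]
      exact_mod_cast le_of_le_of_eq (hm_le i) (Nat.mul_comm _ _)
    have hsum_eq : ∑ i, (m : ℝ) / a i = (∑ i, 1 / (a i : ℝ)) * m := by
      rw [Finset.sum_mul]
      exact Finset.sum_congr rfl fun i _ => by rw [one_div, inv_mul_eq_div]
    constructor
    · rw [le_div_iff₀ hmR, ← hsum_eq]
      exact Finset.sum_le_sum hle
    · intro heq
      have hsv : ∑ i, (v i : ℝ) = ∑ i, (m : ℝ) / a i := by
        rw [hsum_eq]
        exact (div_eq_iff hmR.ne').mp heq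
      have hpt : ∀ i ∈ Finset.univ, (m : ℝ) / a i = (v i : ℝ) :=
        (Finset.sum_eq_sum_iff_of_le hle).mp hsv.symm
      have heqn : ∀ i, m = a i * v i := by
        intro i
        have hi := hpt i (Finset.mem_univ i)
        rw [div_eq_iff (haR i).ne'] at hi
        have hi' : (m : ℝ) = (a i : ℝ) * (v i : ℝ) := hi.trans (mul_comm _ _)
        exact_mod_cast hi'
      have hLm : L ∣ m := Finset.lcm_dvd fun i _ => ⟨v i, heqn i⟩
      obtain ⟨k, hk⟩ := hLm
      have hk0 : 0 < k := by
        rcases Nat.eq_zero_or_pos k with h | h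
        · subst h; simp [hk] at hm_pos
        · exact h
      refine ⟨k, hk0, fun i => ?_⟩
      have : a i * v i = a i * (k * (L / a i)) := by
        rw [mul_left_comm, Nat.mul_div_cancel' (hdvd i), ← heqn i, hk, mul_comm]
      exact Nat.eq_of_mul_eq_mul_left (ha0 i) this
  constructor
  · constructor
    · obtain ⟨hp, hr⟩ := multkey 1 one_pos (fun i => 1 * (L / a i)) (fun _ => rfl)
      exact ⟨_, hp, hr.symm⟩
    · rintro r ⟨v, hv, rfl⟩
      exact (genkey v hv).1
  · intro v hv
    constructor
    · exact (genkey v hv).2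
    · rintro ⟨k, hk, hvk⟩
      exact (multkey k hk v hvk).2
end

section
/- Let R be a commutative ring and 𝔞, 𝔟 ideals of R. Then the product of the integral closures satisfies 𝔞̄ · 𝔟̄ ⊆ (𝔞·𝔟)‾, i.e. the product of an element integral over 𝔞 and an element integral over 𝔟 is integral over 𝔞𝔟. -/
/-- `x ∈ R` is integral over the ideal `I`: it satisfies a monic equation
`x^m + c₁ x^(m-1) + … + cₘ = 0` with `cⱼ ∈ Iʲ`. -/
def IsIntegralOverIdeal {R : Type*} [CommRing R] (I : Ideal R) (x : R) : Prop :=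
  ∃ (m : ℕ) (c : ℕ → R), 0 < m ∧ (∀ j, 1 ≤ j → j ≤ m → c j ∈ I ^ j) ∧
    x ^ m + ∑ j ∈ Finset.Icc 1 m, c j * x ^ (m - j) = 0

/-!
`x` is integral over `I` exactly when `x t` is integral over the Rees algebra `R[I t] ⊆ R[t]`.
With one variable per ideal, `x t₀` and `y t₁` are integral over the bigraded Rees algebra
`R[I t₀, J t₁] ⊆ R[t₀, t₁]`, hence so is their product `x y t₀ t₁`. The coefficients of
`(t₀ t₁)ʲ` in that algebra lie in `Iʲ Jʲ = (I J)ʲ`, so reading off the coefficient of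
`(t₀ t₁)ᵐ` in an integral equation of `x y t₀ t₁` gives an equation of `x y` over `I J`.
-/

open Finset MvPolynomial

theorem Finset.sum_Icc_one_reflect {M : Type*} [AddCommMonoid M] (n : ℕ) (f : ℕ → M) :
    ∑ j ∈ Icc 1 n, f (n - j) = ∑ k ∈ range n, f k :=
  sum_nbij' (n - ·) (n - ·)
    (fun a ha => by simp only [mem_Icc, mem_range] at ha ⊢; omega)
    (fun a ha => by simp only [mem_Icc, mem_range] at ha ⊢; omega)
    (fun a ha => by simp only [mem_Icc] at ha; omega)
    (fun a ha => by simp only [mem_range] at ha; omega)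
    fun _ _ => rfl

theorem Polynomial.monic_X_pow_add_sum_Icc {A : Type*} [CommRing A] (m : ℕ) (a : ℕ → A) :
    (X ^ m + ∑ j ∈ Icc 1 m, C (a j) * X ^ (m - j)).Monic := by
  refine monic_X_pow_add <| (degree_sum_le _ _).trans_lt <|
    (Finset.sup_lt_iff (WithBot.bot_lt_coe m)).2 fun j hj => ?_
  refine (degree_C_mul_X_pow_le _ _).trans_lt (WithBot.coe_lt_coe.2 ?_)
  grind

theorem isIntegral_iff_exists_sum_Icc {A S : Type*} [CommRing A] [CommRing S] [Algebra A S]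
    {z : S} :
    IsIntegral A z ↔ ∃ (m : ℕ) (a : ℕ → A), 0 < m ∧
      z ^ m + ∑ j ∈ Icc 1 m, algebraMap A S (a j) * z ^ (m - j) = 0 := by
  constructor
  · rintro ⟨Q, hQ, hQz⟩
    rcases Nat.eq_zero_or_pos Q.natDegree with hN | hN
    · have : Subsingleton S := by
        rw [hQ.natDegree_eq_zero.1 hN, Polynomial.eval₂_one] at hQz
        exact subsingleton_of_zero_eq_one hQz.symm
      exact ⟨1, 0, one_pos, Subsingleton.elim _ _⟩
    refine ⟨Q.natDegree, fun j => Q.coeff (Q.natDegree - j), hN, ?_⟩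
    rw [← Polynomial.aeval_def, Polynomial.aeval_eq_sum_range, sum_range_succ,
      hQ.coeff_natDegree, one_smul] at hQz
    rw [sum_Icc_one_reflect Q.natDegree fun k => algebraMap A S (Q.coeff k) * z ^ k, add_comm,
      ← hQz]
    simp only [Algebra.smul_def]
  · rintro ⟨m, a, -, hz⟩
    refine ⟨_, Polynomial.monic_X_pow_add_sum_Icc m a, ?_⟩
    simpa [Polynomial.eval₂_finsetSum] using hz

theorem isIntegralOverIdeal_iff_forall_mem_pow {R : Type*} [CommRing R] {I : Ideal R} {x : R} :
    IsIntegralOverIdeal I x ↔ ∃ (m : ℕ) (c : ℕ → R), 0 < m ∧ (∀ j, c j ∈ I ^ j) ∧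
      x ^ m + ∑ j ∈ Icc 1 m, c j * x ^ (m - j) = 0 := by
  classical
  refine ⟨fun ⟨m, c, hm, hc, hx⟩ => ?_,
    fun ⟨m, c, hm, hc, hx⟩ => ⟨m, c, hm, fun j _ _ => hc j, hx⟩⟩
  refine ⟨m, fun j => if j ∈ Icc 1 m then c j else 0, hm, fun j => ?_, ?_⟩
  · dsimp only
    split_ifs with hj
    · exact hc j (mem_Icc.1 hj).1 (mem_Icc.1 hj).2
    · exact zero_mem _
  · rwa [sum_congr rfl fun j hj => congrArg (· * x ^ (m - j)) (if_pos hj)]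

namespace Ideal

variable {R σ : Type*} [CommSemiring R] (I : σ → Ideal R)

def multiPow (d : σ →₀ ℕ) : Ideal R :=
  d.prod fun i n => I i ^ n

@[simp]
theorem multiPow_zero : multiPow I 0 = ⊤ := by
  simp [multiPow, one_eq_top]

theorem multiPow_add (d e : σ →₀ ℕ) : multiPow I (d + e) = multiPow I d * multiPow I e :=
  Finsupp.prod_add_index' (fun _ => pow_zero _) fun _ _ _ => pow_add _ _ _

theorem multiPow_nsmul (k : ℕ) (d : σ →₀ ℕ) : multiPow I (k • d) = multiPow I d ^ k := by
  induction k with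
  | zero => simp [one_eq_top]
  | succ k ih => rw [succ_nsmul, multiPow_add, ih, pow_succ]

@[simp]
theorem multiPow_single (i : σ) (n : ℕ) : multiPow I (Finsupp.single i n) = I i ^ n :=
  Finsupp.prod_single_index (pow_zero _)

end Ideal

section ReesAlgebra

variable {R σ : Type*} [CommSemiring R] (I : σ → Ideal R)

/-- The multigraded Rees algebra `R[I₁ t₁, …, Iₙ tₙ] ⊆ R[t₁, …, tₙ]`. -/
def multiReesAlgebra : Subalgebra R (MvPolynomial σ R) where
  carrier := {p | ∀ d, p.coeff d ∈ Ideal.multiPow I d}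
  mul_mem' hp hq d := by
    classical
    rw [coeff_mul]
    refine sum_mem fun u hu => ?_
    rw [← mem_antidiagonal.1 hu, Ideal.multiPow_add]
    exact Ideal.mul_mem_mul (hp u.1) (hq u.2)
  add_mem' hp hq d := by
    rw [coeff_add]
    exact add_mem (hp d) (hq d)
  algebraMap_mem' r d := by
    classical
    rw [algebraMap_eq, coeff_C]
    split_ifs with h
    · simp [← h]
    · exact zero_mem _

theorem monomial_mem_multiReesAlgebra_iff {d : σ →₀ ℕ} {r : R} :
    monomial d r ∈ multiReesAlgebra I ↔ r ∈ Ideal.multiPow I d := by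
  classical
  refine ⟨fun h => by simpa using h d, fun hr e => ?_⟩
  rw [coeff_monomial]
  split_ifs with h
  · exact h ▸ hr
  · exact zero_mem _

end ReesAlgebra

section IntegralOverReesAlgebra

variable {R σ : Type*} [CommRing R]

theorem MvPolynomial.monomial_nsmul_mul_monomial_pow {j m : ℕ} (hj : j ≤ m) (d : σ →₀ ℕ)
    (a r : R) :
    monomial (j • d) a * monomial d r ^ (m - j) = monomial (m • d) (a * r ^ (m - j)) := by
  rw [monomial_pow, monomial_mul, ← add_nsmul, Nat.add_sub_cancel' hj]

theorem MvPolynomial.coeff_nsmul_mul_monomial_pow {j m : ℕ} (hj : j ≤ m) (d : σ →₀ ℕ)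
    (p : MvPolynomial σ R) (r : R) :
    coeff (m • d) (p * monomial d r ^ (m - j)) = coeff (j • d) p * r ^ (m - j) := by
  rw [monomial_pow, ← Nat.add_sub_cancel' hj, add_nsmul, Nat.add_sub_cancel_left,
    coeff_mul_monomial]

theorem isIntegral_monomial_iff (I : σ → Ideal R) {d : σ →₀ ℕ} {r : R} :
    IsIntegral (multiReesAlgebra I) (monomial d r) ↔
      IsIntegralOverIdeal (Ideal.multiPow I d) r := by
  rw [isIntegral_iff_exists_sum_Icc, isIntegralOverIdeal_iff_forall_mem_pow]
  constructor
  · rintro ⟨m, a, hm, h⟩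
    refine ⟨m, fun j => coeff (j • d) (a j : MvPolynomial σ R), hm, fun j => ?_, ?_⟩
    · exact Ideal.multiPow_nsmul I j d ▸ (a j).2 (j • d)
    · classical
      have hcoeff := congrArg (coeff (m • d)) h
      rwa [coeff_add, coeff_sum, monomial_pow, coeff_monomial, if_pos rfl, coeff_zero,
        sum_congr rfl fun j hj => coeff_nsmul_mul_monomial_pow (mem_Icc.1 hj).2 d _ r]
        at hcoeff
  · rintro ⟨m, c, hm, hc, h⟩
    refine ⟨m, fun j => ⟨monomial (j • d) (c j),
      (monomial_mem_multiReesAlgebra_iff I).2 (Ideal.multiPow_nsmul I j d ▸ hc j)⟩, hm, ?_⟩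
    change monomial d r ^ m + ∑ j ∈ Icc 1 m, monomial (j • d) (c j) * monomial d r ^ (m - j) = 0
    rw [sum_congr rfl fun j hj => monomial_nsmul_mul_monomial_pow (mem_Icc.1 hj).2 d _ r,
      monomial_pow, ← map_sum, ← map_add, h, map_zero]

end IntegralOverReesAlgebra

/-- The product of an element integral over `I` with an element integral over `J` is
integral over `I * J`; i.e., `Ī · J̄ ⊆ (I·J)‾`. -/
theorem mul_mem_integralClosure_mul {R : Type*} [CommRing R] (I J : Ideal R) (x y : R)
    (hx : IsIntegralOverIdeal I x) (hy : IsIntegralOverIdeal J y) :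
    IsIntegralOverIdeal (I * J) (x * y) := by
  set A := multiReesAlgebra ![I, J]
  have hx' : IsIntegral A (monomial (Finsupp.single (0 : Fin 2) 1) x) :=
    (isIntegral_monomial_iff _).2 (by simpa using hx)
  have hy' : IsIntegral A (monomial (Finsupp.single (1 : Fin 2) 1) y) :=
    (isIntegral_monomial_iff _).2 (by simpa using hy)
  have hxy : IsIntegral A (monomial (Finsupp.single (0 : Fin 2) 1 + Finsupp.single 1 1) (x * y)) :=
    monomial_mul (R := R) ▸ hx'.mul hy'
  simpa [Ideal.multiPow_add] using (isIntegral_monomial_iff _).1 hxy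
end

section
/- Let f ∈ ℂ[x₁,…,xₙ] and define h̃₁(y₁,…,yₙ) = f(y₁,…,y_{n-1}, yₙ^d) for an integer d ≥ 1. If both f and its restriction g(x₁,…,x_{n-1}) = f(x₁,…,x_{n-1},0) have isolated singularities at the origin (their Jacobian ideals vanish, near 0, only at 0), then h̃₁ has an isolated singularity at the origin. -/
open MvPolynomial

private noncomputable def σsub (n d : ℕ) : Fin (n + 1) → MvPolynomial (Fin (n + 1)) ℂ :=
  fun j => if j = Fin.last n then X (Fin.last n) ^ d else X j

private noncomputable def ιsub (n : ℕ) : Fin (n + 1) → MvPolynomial (Fin n) ℂ :=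
  fun j => if h : (j : ℕ) < n then (X ⟨j, h⟩ : MvPolynomial (Fin n) ℂ) else 0

private lemma pderiv_bind_ne (n d : ℕ) (i : Fin (n + 1)) (hi : i ≠ Fin.last n)
    (p : MvPolynomial (Fin (n + 1)) ℂ) :
    pderiv i (bind₁ (σsub n d) p) = bind₁ (σsub n d) (pderiv i p) := by
  induction p using MvPolynomial.induction_on with
  | C a => simp
  | add p q hp hq => simp [hp, hq]
  | mul_X p j hp =>
      have key : pderiv i (σsub n d j) = bind₁ (σsub n d) (pderiv i (X j)) := by
        rcases eq_or_ne j (Fin.last n) with rfl | hj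
        · simp [σsub, pderiv_pow, pderiv_X_of_ne hi.symm, pderiv_X_of_ne hi]
        · rcases eq_or_ne j i with rfl | hji
          · simp [σsub, hj]
          · simp [σsub, hj, pderiv_X_of_ne hji]
      simp only [map_mul, bind₁_X_right, pderiv_mul, hp, key, map_add, map_mul]

private lemma pderiv_bind_last (n d : ℕ) (p : MvPolynomial (Fin (n + 1)) ℂ) :
    pderiv (Fin.last n) (bind₁ (σsub n d) p) =
      bind₁ (σsub n d) (pderiv (Fin.last n) p) *
        (C (d : ℂ) * X (Fin.last n) ^ (d - 1)) := by
  induction p using MvPolynomial.induction_on with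
  | C a => simp
  | add p q hp hq => simp [hp, hq, add_mul]
  | mul_X p j hp =>
      have key : pderiv (Fin.last n) (σsub n d j) =
          bind₁ (σsub n d) (pderiv (Fin.last n) (X j)) *
            (C (d : ℂ) * X (Fin.last n) ^ (d - 1)) := by
        rcases eq_or_ne j (Fin.last n) with rfl | hj
        · simp [σsub, pderiv_pow]
          try ring
        · simp [σsub, hj, pderiv_X_of_ne hj]
      simp only [map_mul, bind₁_X_right, pderiv_mul, hp, key, map_add, map_mul]
      ring

private lemma pderiv_aeval_ι (n : ℕ) (i : Fin n) (p : MvPolynomial (Fin (n + 1)) ℂ) :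
    pderiv i (bind₁ (ιsub n) p) = bind₁ (ιsub n) (pderiv (Fin.castSucc i) p) := by
  induction p using MvPolynomial.induction_on with
  | C a => simp
  | add p q hp hq => simp [hp, hq]
  | mul_X p j hp =>
      have key : pderiv i (ιsub n j) = bind₁ (ιsub n) (pderiv (Fin.castSucc i) (X j)) := by
        by_cases h : (j : ℕ) < n
        · rcases eq_or_ne (⟨j, h⟩ : Fin n) i with hji | hji
          · have : j = Fin.castSucc i := by
              apply Fin.ext; simpa using congrArg (Fin.val) hji
            simp [ιsub, h, this, hji]
          · have : j ≠ Fin.castSucc i := by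
              intro hc
              exact hji (by apply Fin.ext; simpa using congrArg (Fin.val) hc)
            simp [ιsub, h, pderiv_X_of_ne (show (⟨j, h⟩ : Fin n) ≠ i from hji),
              pderiv_X_of_ne this]
        · have : j ≠ Fin.castSucc i := by
            intro hc; exact h (by simpa [hc] using (Fin.castSucc i).isLt)
          simp [ιsub, h, pderiv_X_of_ne this]
      simp only [map_mul, bind₁_X_right, pderiv_mul, hp, key, map_add, map_mul]

private lemma eval_bind (n d : ℕ) (y : Fin (n + 1) → ℂ) (p : MvPolynomial (Fin (n + 1)) ℂ) :
    eval y (bind₁ (σsub n d) p) = eval (fun j => eval y (σsub n d j)) p := by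
  induction p using MvPolynomial.induction_on with
  | C a => simp
  | add p q hp hq => simp [hp, hq]
  | mul_X p j hp => simp [hp]

private lemma eval_aevalι (n : ℕ) (x : Fin n → ℂ) (p : MvPolynomial (Fin (n + 1)) ℂ) :
    eval x (bind₁ (ιsub n) p) = eval (fun j => eval x (ιsub n j)) p := by
  induction p using MvPolynomial.induction_on with
  | C a => simp
  | add p q hp hq => simp [hp, hq]
  | mul_X p j hp => simp [hp]

/-- If `f` and its restriction `g = f(x₁,…,x_{n-1},0)` both have isolated singularities at the
origin, then `h̃₁(y) = f(y₁,…,y_{n-1}, yₙ^d)` has an isolated singularity at the origin. -/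
theorem pullback_isolated_singularity (n : ℕ) (f : MvPolynomial (Fin (n + 1)) ℂ) (d : ℕ)
    (hd : 1 ≤ d)
    (hf : ∃ U ∈ nhds (0 : Fin (n + 1) → ℂ), ∀ x ∈ U,
      (∀ i, MvPolynomial.eval x (pderiv i f) = 0) → x = 0)
    (hg : ∃ V ∈ nhds (0 : Fin n → ℂ), ∀ x ∈ V,
      (∀ i, MvPolynomial.eval x (pderiv i
        (aeval (fun j : Fin (n + 1) =>
          if h : (j : ℕ) < n then (X ⟨j, h⟩ : MvPolynomial (Fin n) ℂ) else 0) f)) = 0) →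
      x = 0) :
    ∃ W ∈ nhds (0 : Fin (n + 1) → ℂ), ∀ y ∈ W,
      (∀ i, MvPolynomial.eval y (pderiv i
        (bind₁ (fun j : Fin (n + 1) =>
          if j = Fin.last n then X (Fin.last n) ^ d else X j) f)) = 0) → y = 0 := by
  obtain ⟨U, hU, hUf⟩ := hf
  obtain ⟨V, hV, hVg⟩ := hg
  -- the substitution map π
  set π : (Fin (n + 1) → ℂ) → (Fin (n + 1) → ℂ) :=
    fun y j => if j = Fin.last n then (y (Fin.last n)) ^ d else y j with hπ
  have hπcont : Continuous π := by
    apply continuous_pi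
    intro j
    by_cases h : j = Fin.last n <;> simp [hπ, h] <;> fun_prop
  have hπ0 : π 0 = 0 := by
    funext j
    by_cases h : j = Fin.last n <;>
      simp [hπ, h, zero_pow (show d ≠ 0 by omega)]
  -- the restriction map r
  set r : (Fin (n + 1) → ℂ) → (Fin n → ℂ) := fun y j => y (Fin.castSucc j) with hr
  have hrcont : Continuous r := by
    apply continuous_pi; intro j; exact continuous_apply _
  have hr0 : r 0 = 0 := rfl
  refine ⟨π ⁻¹' U ∩ r ⁻¹' V, ?_, ?_⟩
  · apply Filter.inter_mem
    · exact hπcont.continuousAt.preimage_mem_nhds (by rw [hπ0]; exact hU)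
    · exact hrcont.continuousAt.preimage_mem_nhds (by rw [hr0]; exact hV)
  intro y hy hyd
  have hevalσ : (fun j => eval y (σsub n d j)) = π y := by
    funext j
    by_cases h : j = Fin.last n <;> simp [σsub, hπ, h]
  -- partials of f (except last) vanish at π y
  have hne : ∀ i : Fin (n + 1), i ≠ Fin.last n → eval (π y) (pderiv i f) = 0 := by
    intro i hi
    have := hyd i
    rw [show (fun j : Fin (n + 1) =>
        if j = Fin.last n then (X (Fin.last n) : MvPolynomial (Fin (n+1)) ℂ) ^ d else X j) =
        σsub n d from rfl] at this
    rw [pderiv_bind_ne n d i hi, eval_bind, hevalσ] at this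
    exact this
  -- last partial
  have hlast : eval (π y) (pderiv (Fin.last n) f) * ((d : ℂ) * (y (Fin.last n)) ^ (d - 1)) = 0 := by
    have := hyd (Fin.last n)
    rw [show (fun j : Fin (n + 1) =>
        if j = Fin.last n then (X (Fin.last n) : MvPolynomial (Fin (n+1)) ℂ) ^ d else X j) =
        σsub n d from rfl] at this
    rw [pderiv_bind_last n d, map_mul, eval_bind, hevalσ] at this
    simp only [eval_mul, eval_C, eval_pow, eval_X] at this
    exact this
  by_cases hyn : y (Fin.last n) = 0
  · -- use hg on r y
    have hry : r y ∈ V := hy.2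
    have hπry : (fun j => eval (r y) (ιsub n j)) = π y := by
      funext j
      by_cases h : (j : ℕ) < n
      · have hj : j ≠ Fin.last n := by
          intro hc; rw [hc] at h; simp at h
        simp [ιsub, hπ, hr, h, hj]
      · have hj : j = Fin.last n := by
          have := j.isLt
          apply Fin.ext
          simp only [Fin.val_last]
          omega
        simp [ιsub, hπ, h, hj, hyn, zero_pow (by omega : d ≠ 0)]
    have : r y = 0 := by
      apply hVg _ hry
      intro i
      rw [show (aeval fun j : Fin (n + 1) =>
          if h : (j : ℕ) < n then (X ⟨j, h⟩ : MvPolynomial (Fin n) ℂ) else 0)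
          = bind₁ (ιsub n) from aeval_eq_bind₁ _]
      rw [pderiv_aeval_ι, eval_aevalι, hπry]
      exact hne _ (Fin.castSucc_lt_last i).ne
    funext j
    rcases eq_or_ne j (Fin.last n) with rfl | hj
    · exact hyn
    · have hjn : (j : ℕ) < n := by
        have := j.isLt
        rcases Nat.lt_or_ge (j : ℕ) n with h | h
        · exact h
        · exact absurd (Fin.ext (by simp; omega) : j = Fin.last n) hj
      have := congrFun this ⟨j, hjn⟩
      simpa [hr, Fin.castSucc, Fin.ext_iff] using this
  · -- y last ≠ 0: all partials of f vanish at π y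
    have hall : ∀ i, eval (π y) (pderiv i f) = 0 := by
      intro i
      rcases eq_or_ne i (Fin.last n) with rfl | hi
      · rcases mul_eq_zero.mp hlast with h | h
        · exact h
        · exfalso
          rcases mul_eq_zero.mp h with h | h
          · exact absurd h (Nat.cast_ne_zero.mpr (by omega))
          · rcases eq_or_ne d 1 with rfl | hd1
            · simp at h
            · exact hyn (pow_eq_zero_iff (by omega : d - 1 ≠ 0) |>.mp h)
      · exact hne i hi
    have hπy0 : π y = 0 := hUf _ hy.1 hall
    have h2 := congrFun hπy0 (Fin.last n)
    simp only [hπ, if_pos rfl, Pi.zero_apply] at h2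
    exact absurd (pow_eq_zero_iff (by omega : d ≠ 0) |>.mp h2) hyn
end
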